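/- For any Hermitian N×N complex matrix R, the sum of the positive eigenvalues of R equals the minimum of trace(X) over all Hermitian matrices X satisfying X ⪰ 0 and X ⪰ R (i.e., X and X − R are both positive semidefinite). -/

import Mathlib

open Matrix
open scoped ComplexOrder Classical

/-- The sum of the positive eigenvalues of a matrix (defined to be `0` on
non-Hermitian matrices). -/
noncomputable def posEigSum {N : ℕ} (R : Matrix (Fin N) (Fin N) ℂ) : ℝ :=
  if h : R.IsHermitian then ∑ j, max (h.eigenvalues j) 0 else 0

/-!
Let `U` be a unitary diagonalising `R`, with eigenvalues `λᵢ`. The positive part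
`U diag(max λᵢ 0) U*` of `R` is feasible (`⪰ 0` and `⪰ R`) and has trace `∑ max λᵢ 0`.
Conversely, if `X` is feasible then `Y = U* X U` has the same trace, and `Y ⪰ 0`,
`Y - diag λ = U* (X - R) U ⪰ 0` force `Re Yᵢᵢ ≥ max λᵢ 0` on the diagonal.
-/

namespace Matrix

variable {n 𝕜 : Type*} [Fintype n] [DecidableEq n] [RCLike 𝕜]

lemma PosSemidef.conjStarAlgAut {X : Matrix n n 𝕜} (hX : X.PosSemidef)
    (u : unitary (Matrix n n 𝕜)) : (Unitary.conjStarAlgAut 𝕜 _ u X).PosSemidef := by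
  rw [Unitary.conjStarAlgAut_apply, star_eq_conjTranspose]
  exact hX.mul_mul_conjTranspose_same _

lemma trace_conjStarAlgAut (u : unitary (Matrix n n 𝕜)) (X : Matrix n n 𝕜) :
    (Unitary.conjStarAlgAut 𝕜 _ u X).trace = X.trace := by
  rw [Unitary.conjStarAlgAut_apply, trace_mul_cycle, Unitary.coe_star_mul_self, one_mul]

namespace IsHermitian

variable {A : Matrix n n 𝕜} (hA : A.IsHermitian)

lemma posSemidef_cfc {f : ℝ → ℝ} (hf : ∀ i, 0 ≤ f (hA.eigenvalues i)) :
    (hA.cfc f).PosSemidef :=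
  (posSemidef_diagonal_iff.mpr fun i => by simpa using hf i).conjStarAlgAut _

lemma trace_cfc (f : ℝ → ℝ) : (hA.cfc f).trace = ∑ i, (f (hA.eigenvalues i) : 𝕜) := by
  simp only [IsHermitian.cfc, trace_conjStarAlgAut, trace_diagonal, Function.comp_apply]

lemma cfc_sub_self (f : ℝ → ℝ) : hA.cfc f - A = hA.cfc (fun x => f x - x) := by
  rw [IsHermitian.cfc, IsHermitian.cfc]
  conv_lhs => enter [2]; rw [hA.spectral_theorem]
  rw [← map_sub, diagonal_sub]
  congr 2
  ext i
  simp

lemma eigenvalues_le_re_diag_conj {X : Matrix n n 𝕜} (hXA : (X - A).PosSemidef) (i : n) :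
    hA.eigenvalues i ≤
      RCLike.re (Unitary.conjStarAlgAut 𝕜 _ (star hA.eigenvectorUnitary) X i i) := by
  have h := (hXA.conjStarAlgAut (star hA.eigenvectorUnitary)).diag_nonneg (i := i)
  rw [map_sub, conjStarAlgAut_star_eigenvectorUnitary] at h
  simpa [sub_nonneg] using (RCLike.nonneg_iff.mp h).1

lemma sum_max_eigenvalues_le_re_trace {X : Matrix n n 𝕜} (hX : X.PosSemidef)
    (hXA : (X - A).PosSemidef) : ∑ i, max (hA.eigenvalues i) 0 ≤ RCLike.re X.trace := by
  set Y := Unitary.conjStarAlgAut 𝕜 _ (star hA.eigenvectorUnitary) X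
  have hY : Y.PosSemidef := hX.conjStarAlgAut _
  rw [← trace_conjStarAlgAut (star hA.eigenvectorUnitary), trace, map_sum]
  exact Finset.sum_le_sum fun i _ =>
    max_le (hA.eigenvalues_le_re_diag_conj hXA i) (RCLike.nonneg_iff.mp hY.diag_nonneg).1

end IsHermitian

end Matrix

/-- For a Hermitian matrix `R`, the sum of its positive eigenvalues equals the minimum of
`trace X` over all Hermitian `X` with `X ⪰ 0` and `X ⪰ R`. -/
theorem posEigSum_eq_min_trace {N : ℕ} (R : Matrix (Fin N) (Fin N) ℂ)
    (hR : R.IsHermitian) :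
    IsLeast {t : ℝ | ∃ X : Matrix (Fin N) (Fin N) ℂ,
        X.PosSemidef ∧ (X - R).PosSemidef ∧ t = (X.trace).re} (posEigSum R) := by
  rw [posEigSum, dif_pos hR]
  refine ⟨⟨hR.cfc (max · 0), hR.posSemidef_cfc fun _ => le_max_right _ _, ?_, ?_⟩, ?_⟩
  · rw [hR.cfc_sub_self]
    exact hR.posSemidef_cfc fun _ => sub_nonneg.2 (le_max_left _ _)
  · simp [hR.trace_cfc]
  · rintro t ⟨X, hX, hXR, rfl⟩
    exact hR.sum_max_eigenvalues_le_re_trace hX hXR
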